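/- arXiv:1406.1779 — 2 statements merged into one kernel-verified Lean document; each statement's English description precedes it below -/
import Mathlib

section
/- Let p₁, p₂ ∈ (0,1). Then ∫₀¹ ⌊ln(1−u)/ln(1−p₁)⌋ · ⌊ln(u)/ln(1−p₂)⌋ du ≤ (2 − π²/6) / (ln(1−p₁) · ln(1−p₂)). -/
/-!
For `u ∈ (0,1)` both ratios `log (1 - u) / log (1 - p₁)` and `log u / log (1 - p₂)` are
nonnegative, so `⌊s⌋⌊t⌋ ≤ st` bounds the integrand by
`log u log (1 - u) / (log (1 - p₁) log (1 - p₂))`.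
Expanding `-log (1 - u) = ∑ u^(n+1)/(n+1)` and using `∫₀¹ u^m log u = -1/(m+1)²`,
`∫₀¹ log u log (1 - u) = ∑ 1/((n+1)(n+2)²) = ∑ (1/(n+1) - 1/(n+2)) - ∑ 1/(n+2)²`,
which is `1 - (π²/6 - 1)`.
-/

open MeasureTheory Real Set Filter Topology

section Floor

variable {α : Type*} [Ring α] [LinearOrder α] [IsStrictOrderedRing α] [FloorRing α]

theorem Int.cast_floor_mul_floor_nonneg {s t : α} (hs : 0 ≤ s) (ht : 0 ≤ t) :
    0 ≤ (⌊s⌋ : α) * ⌊t⌋ :=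
  mul_nonneg (Int.cast_nonneg (Int.floor_nonneg.2 hs)) (Int.cast_nonneg (Int.floor_nonneg.2 ht))

theorem Int.cast_floor_mul_floor_le {s t : α} (hs : 0 ≤ s) (ht : 0 ≤ t) :
    (⌊s⌋ : α) * ⌊t⌋ ≤ s * t :=
  mul_le_mul (Int.floor_le s) (Int.floor_le t) (Int.cast_nonneg (Int.floor_nonneg.2 ht)) hs

end Floor

theorem Antitone.hasSum_sub_succ {f : ℕ → ℝ} {l : ℝ} (hf : Antitone f)
    (hl : Tendsto f atTop (𝓝 l)) : HasSum (fun n ↦ f n - f (n + 1)) (f 0 - l) := by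
  rw [hasSum_iff_tendsto_nat_of_nonneg fun n ↦ sub_nonneg.2 (hf n.le_succ)]
  simp_rw [Finset.sum_range_sub']
  exact tendsto_const_nhds.sub hl

theorem hasSum_one_div_succ_mul_succ_succ_sq :
    HasSum (fun n : ℕ ↦ 1 / ((n + 1 : ℝ) * (n + 2) ^ 2)) (2 - π ^ 2 / 6) := by
  have htelescope : HasSum (fun n : ℕ ↦ 1 / (n + 1 : ℝ) - 1 / (n + 2)) 1 := by
    have hanti : Antitone fun n : ℕ ↦ 1 / (n + 1 : ℝ) := fun m n hmn ↦
      one_div_le_one_div_of_le (by positivity) (by gcongr)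
    simpa [add_assoc, one_add_one_eq_two] using
      hanti.hasSum_sub_succ tendsto_one_div_add_atTop_nhds_zero_nat
  have hbasel : HasSum (fun n : ℕ ↦ 1 / (n + 2 : ℝ) ^ 2) (π ^ 2 / 6 - 1) := by
    simpa [Finset.sum_range_succ, add_assoc, one_add_one_eq_two] using
      (hasSum_nat_add_iff' 2).2 hasSum_zeta_two
  have := htelescope.sub hbasel
  rw [show (1 : ℝ) - (π ^ 2 / 6 - 1) = 2 - π ^ 2 / 6 by ring] at this
  refine this.congr_fun fun n ↦ ?_
  field_simp
  ring

theorem integral_Ioo_zero_one_pow_mul_log (m : ℕ) :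
    ∫ x in Ioo (0 : ℝ) 1, x ^ m * log x = -1 / (m + 1) ^ 2 := by
  have hm : (m + 1 : ℝ) ≠ 0 := by positivity
  let F : ℝ → ℝ := fun x ↦ x ^ m * (x * log x) / (m + 1) - x ^ (m + 1) / (m + 1) ^ 2
  have hF : ∀ x ∈ Ioo (0 : ℝ) 1, HasDerivAt F (x ^ m * log x) x := by
    intro x hx
    have := (((hasDerivAt_pow (m + 1) x).mul (hasDerivAt_log hx.1.ne')).div_const (m + 1)).sub
      ((hasDerivAt_pow (m + 1) x).div_const ((m + 1) ^ 2))
    refine (this.congr_of_eventuallyEq (.of_forall fun y ↦ ?_)).congr_deriv ?_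
    · simp only [F, Pi.sub_apply, Pi.mul_apply]; ring
    · field_simp [hx.1.ne']; push_cast; ring
  rw [← integral_Ioc_eq_integral_Ioo, ← intervalIntegral.integral_of_le zero_le_one,
    intervalIntegral.integral_eq_sub_of_hasDerivAt_of_le zero_le_one (by fun_prop) hF
      (intervalIntegral.intervalIntegrable_log'.continuousOn_mul (continuousOn_pow m))]
  simp [F, neg_div]

theorem log_mul_log_one_sub_le {x : ℝ} (hx : x ∈ Ioo 0 1) :
    log x * log (1 - x) ≤ log 2 * (-log x - log (1 - x)) := by
  wlog hhalf : x ≤ 1 / 2 generalizing x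
  · have := this (x := 1 - x) ⟨by linarith [hx.2], by linarith [hx.1]⟩ (by linarith)
    rw [sub_sub_cancel] at this
    linarith
  have hlog_x : log x ≤ 0 := log_nonpos hx.1.le hx.2.le
  have hlog_one_sub : -log 2 ≤ log (1 - x) := by
    rw [← log_inv, ← one_div]
    exact log_le_log (by norm_num) (by linarith)
  nlinarith [log_nonpos (by linarith [hx.2] : 0 ≤ 1 - x) (by linarith [hx.1])]

theorem integrableOn_Ioo_zero_one_log_mul_log_one_sub :
    IntegrableOn (fun x ↦ log x * log (1 - x)) (Ioo (0 : ℝ) 1) := by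
  have hlog : IntegrableOn log (Ioo (0 : ℝ) 1) :=
    (intervalIntegrable_iff_integrableOn_Ioo_of_le zero_le_one).1
      intervalIntegral.intervalIntegrable_log'
  have hlog_one_sub : IntegrableOn (fun x ↦ log (1 - x)) (Ioo (0 : ℝ) 1) := by
    have := (intervalIntegral.intervalIntegrable_log' (a := 1) (b := 0)).comp_sub_left 1
    rw [sub_self, sub_zero] at this
    exact (intervalIntegrable_iff_integrableOn_Ioo_of_le zero_le_one).1 this
  refine Integrable.mono' ((hlog.neg.sub hlog_one_sub).const_mul (log 2)) (by fun_prop) ?_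
  filter_upwards [ae_restrict_mem measurableSet_Ioo] with x hx
  rw [norm_of_nonneg (mul_nonneg_of_nonpos_of_nonpos (log_nonpos hx.1.le hx.2.le)
    (log_nonpos (by linarith [hx.2]) (by linarith [hx.1])))]
  exact log_mul_log_one_sub_le hx

theorem integral_Ioo_zero_one_log_mul_log_one_sub :
    ∫ x in Ioo (0 : ℝ) 1, log x * log (1 - x) = 2 - π ^ 2 / 6 := by
  let F : ℕ → ℝ → ℝ := fun n x ↦ -log x * (x ^ (n + 1) / (n + 1))
  have hF_nonneg : ∀ n, ∀ x ∈ Ioo (0 : ℝ) 1, 0 ≤ F n x := fun n x hx ↦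
    mul_nonneg (neg_nonneg.2 (log_nonpos hx.1.le hx.2.le)) (by have := hx.1; positivity)
  have hF_int : ∀ n, IntegrableOn (F n) (Ioo (0 : ℝ) 1) := fun n ↦
    (intervalIntegrable_iff_integrableOn_Ioo_of_le zero_le_one).1
      (intervalIntegral.intervalIntegrable_log'.neg.mul_continuousOn (by fun_prop))
  have hF_integral (n : ℕ) :
      ∫ x in Ioo (0 : ℝ) 1, F n x = 1 / ((n + 1 : ℝ) * (n + 2) ^ 2) := by
    simp only [F, neg_mul, integral_neg, mul_div_assoc', mul_comm (log _), integral_div,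
      integral_Ioo_zero_one_pow_mul_log]
    push_cast
    field_simp
    ring
  have hF_sum : ∀ x ∈ Ioo (0 : ℝ) 1, HasSum (F · x) (log x * log (1 - x)) := by
    intro x hx
    have := (hasSum_pow_div_log_of_abs_lt_one (abs_lt.2 ⟨by linarith [hx.1], hx.2⟩)).mul_left
      (-log x)
    rwa [neg_mul_neg] at this
  have hF_norm_sum : Summable fun n ↦ ∫ x in Ioo (0 : ℝ) 1, ‖F n x‖ := by
    refine hasSum_one_div_succ_mul_succ_succ_sq.summable.congr fun n ↦ ?_
    rw [← hF_integral, setIntegral_congr_fun measurableSet_Ioo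
      fun x hx ↦ norm_of_nonneg (hF_nonneg n x hx)]
  rw [setIntegral_congr_fun measurableSet_Ioo fun x hx ↦ (hF_sum x hx).tsum_eq.symm,
    ← integral_tsum_of_summable_integral_norm hF_int hF_norm_sum]
  simpa only [hF_integral] using hasSum_one_div_succ_mul_succ_succ_sq.tsum_eq

/-- For `p₁, p₂ ∈ (0,1)`:
`∫₀¹ ⌊ln(1−u)/ln(1−p₁)⌋ ⌊ln u/ln(1−p₂)⌋ du ≤ (2 − π²/6)/(ln(1−p₁) ln(1−p₂))`. -/
theorem antithetic_product_integral_upper_bound (p₁ p₂ : ℝ)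
    (h₁ : p₁ ∈ Set.Ioo (0 : ℝ) 1) (h₂ : p₂ ∈ Set.Ioo (0 : ℝ) 1) :
    (∫ u in Set.Ioo (0 : ℝ) 1,
        (⌊Real.log (1 - u) / Real.log (1 - p₁)⌋ : ℝ) * (⌊Real.log u / Real.log (1 - p₂)⌋ : ℝ))
      ≤ (2 - Real.pi ^ 2 / 6) / (Real.log (1 - p₁) * Real.log (1 - p₂)) := by
  have ha : log (1 - p₁) < 0 := log_neg (by linarith [h₁.2]) (by linarith [h₁.1])
  have hb : log (1 - p₂) < 0 := log_neg (by linarith [h₂.2]) (by linarith [h₂.1])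
  have hratios : ∀ u ∈ Ioo (0 : ℝ) 1,
      0 ≤ log (1 - u) / log (1 - p₁) ∧ 0 ≤ log u / log (1 - p₂) := fun u hu ↦
    ⟨div_nonneg_of_nonpos (log_nonpos (by linarith [hu.2]) (by linarith [hu.1])) ha.le,
      div_nonneg_of_nonpos (log_nonpos hu.1.le hu.2.le) hb.le⟩
  rw [← integral_Ioo_zero_one_log_mul_log_one_sub, ← integral_div]
  refine integral_mono_of_nonneg ?_
    (integrableOn_Ioo_zero_one_log_mul_log_one_sub.div_const _) ?_
  · filter_upwards [ae_restrict_mem measurableSet_Ioo] with u hu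
    exact Int.cast_floor_mul_floor_nonneg (hratios u hu).1 (hratios u hu).2
  · filter_upwards [ae_restrict_mem measurableSet_Ioo] with u hu
    calc _ ≤ log (1 - u) / log (1 - p₁) * (log u / log (1 - p₂)) :=
          Int.cast_floor_mul_floor_le (hratios u hu).1 (hratios u hu).2
      _ = log u * log (1 - u) / (log (1 - p₁) * log (1 - p₂)) := by ring
end

section
/- Let p₁, p₂ ∈ (0,1). Then the minimum correlation satisfies ρ₋(p₁,p₂) ≤ g(p₁,p₂), where g(p₁,p₂) = [p₁/ln(1−p₁)]·[p₂/ln(1−p₂)] / √((1−p₁)(1−p₂)) · (2 − π²/6) − √((1−p₁)(1−p₂)). -/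
/-!
On `(0, 1)` both `log (1 - u) / log (1 - p₁)` and `log u / log (1 - p₂)` are nonnegative, so
dropping the floors bounds the integrand by `log (1 - u) * log u / (log (1 - p₁) * log (1 - p₂))`.
Expanding `-log (1 - u) = ∑ uⁿ⁺¹ / (n + 1)` and using `∫₀¹ uᵏ log u du = -1 / (k + 1)²` gives
`∫₀¹ log (1 - u) log u du = ∑ 1 / ((n + 1)(n + 2)²) = 2 - π² / 6`; the rest is algebra.
-/

open MeasureTheory Real Set Filter Topology

lemma hasSum_sub_succ_of_tendsto_zero {f : ℕ → ℝ} (hf : Antitone f) (h : Tendsto f atTop (𝓝 0)) :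
    HasSum (fun n ↦ f n - f (n + 1)) (f 0) := by
  rw [hasSum_iff_tendsto_nat_of_nonneg fun n ↦ sub_nonneg.2 (hf n.le_succ)]
  simp_rw [Finset.sum_range_sub']
  simpa using tendsto_const_nhds.sub h

-- `1 / ((n + 1)(n + 2)²) = 1 / (n + 1) - 1 / (n + 2) - 1 / (n + 2)²`: a telescoping series minus
-- the Basel series without its first term.
lemma hasSum_one_div_add_one_mul_add_two_sq :
    HasSum (fun n : ℕ ↦ 1 / (((n : ℝ) + 1) * ((n : ℝ) + 2) ^ 2)) (2 - π ^ 2 / 6) := by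
  have telescope : HasSum (fun n : ℕ ↦ 1 / ((n : ℝ) + 1) - 1 / ((n : ℝ) + 2)) 1 := by
    have := hasSum_sub_succ_of_tendsto_zero (f := fun n : ℕ ↦ 1 / ((n : ℝ) + 1))
      (fun m n hmn ↦ one_div_le_one_div_of_le (by positivity) (by gcongr))
      tendsto_one_div_add_atTop_nhds_zero_nat
    simpa [add_assoc, one_add_one_eq_two] using this
  have basel : HasSum (fun n : ℕ ↦ 1 / ((n : ℝ) + 2) ^ 2) (π ^ 2 / 6 - 1) := by
    have := (hasSum_nat_add_iff' 2).2 hasSum_zeta_two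
    simpa [Finset.sum_range_succ] using this
  rw [show 2 - π ^ 2 / 6 = 1 - (π ^ 2 / 6 - 1) by ring]
  refine (telescope.sub basel).congr_fun fun n ↦ ?_
  field_simp
  ring

lemma integral_pow_mul_log (n : ℕ) : ∫ x in (0 : ℝ)..1, x ^ n * log x = -1 / ((n : ℝ) + 1) ^ 2 := by
  have hn : (n : ℝ) + 1 ≠ 0 := by positivity
  rw [intervalIntegral.integral_eq_sub_of_hasDerivAt_of_tendsto zero_lt_one
    (f := fun x ↦ x ^ (n + 1) * (log x / (n + 1) - 1 / (n + 1) ^ 2)) (fa := 0)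
    (fb := -1 / ((n : ℝ) + 1) ^ 2)]
  · ring
  · intro x hx
    refine ((hasDerivAt_pow (n + 1) x).mul
      (((hasDerivAt_log hx.1.ne').div_const ((n : ℝ) + 1)).sub_const
        (1 / ((n : ℝ) + 1) ^ 2))).congr_deriv ?_
    have hx0 := hx.1.ne'
    rw [Nat.add_sub_cancel]
    push_cast
    field_simp
    ring
  · exact intervalIntegral.intervalIntegrable_log'.continuousOn_mul (continuous_pow n).continuousOn
  · have hlog := (tendsto_log_mul_rpow_nhdsGT_zero (r := n + 1) (by positivity)).div_const
      ((n : ℝ) + 1)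
    have hpow : Tendsto (fun x : ℝ ↦ x ^ (n + 1)) (𝓝[>] 0) (𝓝 0) :=
      tendsto_nhdsWithin_of_tendsto_nhds (by simpa using (continuous_pow (n + 1)).tendsto (0 : ℝ))
    convert hlog.sub (hpow.mul_const (1 / ((n : ℝ) + 1) ^ 2)) using 1
    · ext x
      rw [← Nat.cast_add_one, rpow_natCast]
      ring
    · simp
  · refine tendsto_nhdsWithin_of_tendsto_nhds ?_
    have : ContinuousAt (fun x : ℝ ↦ x ^ (n + 1) * (log x / (n + 1) - 1 / (n + 1) ^ 2)) 1 := by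
      fun_prop (disch := norm_num)
    simpa [neg_div] using this.tendsto

lemma integrableOn_pow_mul_log (n : ℕ) : IntegrableOn (fun x : ℝ ↦ x ^ n * log x) (Ioo 0 1) :=
  (intervalIntegrable_iff_integrableOn_Ioo_of_le zero_le_one).1
    (intervalIntegral.intervalIntegrable_log'.continuousOn_mul (continuous_pow n).continuousOn)

lemma integral_log_one_sub_mul_log : ∫ u in Ioo (0 : ℝ) 1, log (1 - u) * log u = 2 - π ^ 2 / 6 := by
  set F : ℕ → ℝ → ℝ := fun n u ↦ -(((n : ℝ) + 1)⁻¹ * (u ^ (n + 1) * log u))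
  have hF_int (n : ℕ) : Integrable (F n) (volume.restrict (Ioo 0 1)) :=
    ((integrableOn_pow_mul_log (n + 1)).const_mul _).neg
  have hF_val (n : ℕ) : ∫ u in Ioo 0 1, F n u = 1 / (((n : ℝ) + 1) * ((n : ℝ) + 2) ^ 2) := by
    rw [integral_neg, integral_const_mul, ← integral_Ioc_eq_integral_Ioo,
      ← intervalIntegral.integral_of_le zero_le_one, integral_pow_mul_log]
    push_cast
    field_simp
    ring
  have hF_norm (n : ℕ) : ∫ u in Ioo 0 1, ‖F n u‖ = ∫ u in Ioo 0 1, F n u := by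
    refine setIntegral_congr_fun measurableSet_Ioo fun u hu ↦ norm_of_nonneg ?_
    simp only [F, neg_nonneg]
    exact mul_nonpos_of_nonneg_of_nonpos (by positivity)
      (mul_nonpos_of_nonneg_of_nonpos (pow_nonneg hu.1.le _) (log_nonpos hu.1.le hu.2.le))
  have hsum := hasSum_integral_of_summable_integral_norm hF_int
    (by simpa only [hF_norm, hF_val] using hasSum_one_div_add_one_mul_add_two_sq.summable)
  simp only [hF_val] at hsum
  rw [hasSum_one_div_add_one_mul_add_two_sq.unique hsum]
  refine setIntegral_congr_fun measurableSet_Ioo fun u hu ↦ ?_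
  have hlog := hasSum_pow_div_log_of_abs_lt_one (by rw [abs_of_pos hu.1]; exact hu.2)
  rw [((hlog.mul_right (-log u)).congr_fun fun n ↦ ?_).tsum_eq]
  · ring
  · simp only [F]
    ring

lemma integrableOn_log_one_sub_mul_log :
    IntegrableOn (fun u : ℝ ↦ log (1 - u) * log u) (Ioo 0 1) :=
  -- A non-integrable function has Bochner integral `0`.
  Integrable.of_integral_ne_zero <| by
    rw [integral_log_one_sub_mul_log]
    nlinarith [pi_lt_d2, pi_pos]

lemma floor_mul_floor_le {α : Type*} [Ring α] [LinearOrder α] [IsStrictOrderedRing α]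
    [FloorRing α] {x y : α} (hx : 0 ≤ x) (hy : 0 ≤ y) : (⌊x⌋ : α) * ⌊y⌋ ≤ x * y :=
  mul_le_mul (Int.floor_le x) (Int.floor_le y) (Int.cast_nonneg (Int.floor_nonneg.2 hy)) hx

lemma integral_floor_mul_floor_le {a b : ℝ} (ha : a < 0) (hb : b < 0) :
    ∫ u in Ioo (0 : ℝ) 1, (⌊log (1 - u) / a⌋ : ℝ) * ⌊log u / b⌋ ≤ (2 - π ^ 2 / 6) / (a * b) := by
  have hnonneg₁ {u : ℝ} (hu : u ∈ Ioo (0 : ℝ) 1) : 0 ≤ log (1 - u) / a :=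
    div_nonneg_of_nonpos (log_nonpos (by linarith [hu.2]) (by linarith [hu.1])) ha.le
  have hnonneg₂ {u : ℝ} (hu : u ∈ Ioo (0 : ℝ) 1) : 0 ≤ log u / b :=
    div_nonneg_of_nonpos (log_nonpos hu.1.le hu.2.le) hb.le
  have hle (u : ℝ) (hu : u ∈ Ioo (0 : ℝ) 1) :
      (⌊log (1 - u) / a⌋ : ℝ) * ⌊log u / b⌋ ≤ log (1 - u) * log u / (a * b) := by
    rw [← div_mul_div_comm]
    exact floor_mul_floor_le (hnonneg₁ hu) (hnonneg₂ hu)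
  have hg_int := integrableOn_log_one_sub_mul_log.div_const (a * b)
  have hf_meas : Measurable fun u : ℝ ↦ (⌊log (1 - u) / a⌋ : ℝ) * ⌊log u / b⌋ := by
    refine (measurable_from_top.comp ?_).mul (measurable_from_top.comp ?_)
    · exact ((measurable_log.comp (measurable_const.sub measurable_id)).div_const a).floor
    · exact (measurable_log.div_const b).floor
  have hf_int : IntegrableOn (fun u : ℝ ↦ (⌊log (1 - u) / a⌋ : ℝ) * ⌊log u / b⌋) (Ioo 0 1) := by
    refine hg_int.mono' hf_meas.aestronglyMeasurable ?_
    refine (ae_restrict_iff' measurableSet_Ioo).2 (ae_of_all _ fun u hu ↦ ?_)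
    rw [norm_of_nonneg (mul_nonneg (Int.cast_nonneg (Int.floor_nonneg.2 (hnonneg₁ hu)))
      (Int.cast_nonneg (Int.floor_nonneg.2 (hnonneg₂ hu))))]
    exact hle u hu
  calc _ ≤ ∫ u in Ioo (0 : ℝ) 1, log (1 - u) * log u / (a * b) :=
        setIntegral_mono_on hf_int hg_int measurableSet_Ioo hle
    _ = (2 - π ^ 2 / 6) / (a * b) := by rw [integral_div, integral_log_one_sub_mul_log]

/-- Upper bound on the minimum correlation between Geometric(p₁) and Geometric(p₂)
random variables:  `ρ₋(p₁,p₂) ≤ g(p₁,p₂)` where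
`g(p₁,p₂) = [p₁/ln(1−p₁)][p₂/ln(1−p₂)]/√((1−p₁)(1−p₂)) · (2 − π²/6) − √((1−p₁)(1−p₂))`
and `ρ₋(p₁,p₂) = (∫₀¹ χ_{p₁}(u) χ_{p₂}(1−u) du − m₁m₂)/(σ₁σ₂)`. -/
theorem min_correlation_upper_bound (p₁ p₂ : ℝ)
    (h₁ : p₁ ∈ Set.Ioo (0 : ℝ) 1) (h₂ : p₂ ∈ Set.Ioo (0 : ℝ) 1) :
    ((∫ u in Set.Ioo (0 : ℝ) 1,
        (⌊Real.log (1 - u) / Real.log (1 - p₁)⌋ : ℝ) * (⌊Real.log u / Real.log (1 - p₂)⌋ : ℝ))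
        - ((1 - p₁) / p₁) * ((1 - p₂) / p₂)) /
      ((Real.sqrt (1 - p₁) / p₁) * (Real.sqrt (1 - p₂) / p₂))
    ≤ (p₁ / Real.log (1 - p₁)) * (p₂ / Real.log (1 - p₂)) / Real.sqrt ((1 - p₁) * (1 - p₂))
        * (2 - Real.pi ^ 2 / 6) - Real.sqrt ((1 - p₁) * (1 - p₂)) := by
  obtain ⟨hp₁, hp₁'⟩ := h₁
  obtain ⟨hp₂, hp₂'⟩ := h₂
  have hq₁ : 0 < 1 - p₁ := by linarith
  have hq₂ : 0 < 1 - p₂ := by linarith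
  have ha : log (1 - p₁) < 0 := log_neg hq₁ (by linarith)
  have hb : log (1 - p₂) < 0 := log_neg hq₂ (by linarith)
  calc _ ≤ ((2 - π ^ 2 / 6) / (log (1 - p₁) * log (1 - p₂)) - (1 - p₁) / p₁ * ((1 - p₂) / p₂)) /
        (√(1 - p₁) / p₁ * (√(1 - p₂) / p₂)) := by
        gcongr
        exact integral_floor_mul_floor_le ha hb
    _ = _ := by
        have hs₁ := sq_sqrt hq₁.le
        have hs₂ := sq_sqrt hq₂.le
        rw [sqrt_mul hq₁.le]
        field_simp
        rw [hs₁, hs₂]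
end
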